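/- arXiv:2207.01309 — 3 statements merged into one kernel-verified Lean document; each statement's English description precedes it below -/
import Mathlib

section
/- Let R be a commutative noetherian ring and Φ a slice sp-filtration of Spec R. Then Φ satisfies the weak Cousin condition if and only if Φ is a codimension filtration, i.e., the associated function f_Φ : Spec R → ℤ is a codimension function on Spec R. -/
/-- A subset of `Spec R` is specialization closed if it is an upper set with respect to
inclusion of primes. An *sp-filtration* of `Spec R` is a decreasing family of
specialization closed subsets indexed by `ℤ`. -/
def IsSpFiltration {R : Type*} [CommRing R] (Φ : ℤ → Set (PrimeSpectrum R)) : Prop :=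
  (∀ n : ℤ, ∀ p ∈ Φ n, ∀ q : PrimeSpectrum R, p ≤ q → q ∈ Φ n) ∧
    ∀ n : ℤ, Φ (n + 1) ⊆ Φ n

/-- An sp-filtration is non-degenerate if the union of its members is all of `Spec R`
and their intersection is empty. -/
def IsNondegenerate {R : Type*} [CommRing R] (Φ : ℤ → Set (PrimeSpectrum R)) : Prop :=
  (⋃ n : ℤ, Φ n) = Set.univ ∧ (⋂ n : ℤ, Φ n) = ∅

/-- A *slice* sp-filtration is a non-degenerate sp-filtration `Φ` such that for each `n ∈ ℤ`
there is no strict inclusion between primes in `Φ(n) \ Φ(n+1)`. -/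
def IsSliceSpFiltration {R : Type*} [CommRing R] (Φ : ℤ → Set (PrimeSpectrum R)) : Prop :=
  IsSpFiltration Φ ∧ IsNondegenerate Φ ∧
    ∀ n : ℤ, ∀ p ∈ Φ n \ Φ (n + 1), ∀ q ∈ Φ n \ Φ (n + 1), ¬ p < q

/-- A codimension function on `Spec R` is a function `d : Spec R → ℤ` such that
`d(q) = d(p) + 1` for every saturated chain `p ⊊ q` of length 1, i.e. whenever `q`
covers `p` in the inclusion order. -/
def IsCodimFunction {R : Type*} [CommRing R] (d : PrimeSpectrum R → ℤ) : Prop :=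
  ∀ p q : PrimeSpectrum R, p ⋖ q → d q = d p + 1

/-- An sp-filtration `Φ` satisfies the weak Cousin condition if for every `n ∈ ℤ` and every
saturated chain `p ⊊ q` of primes, `q ∈ Φ(n)` implies `p ∈ Φ(n − 1)`. -/
def SatisfiesWeakCousin {R : Type*} [CommRing R] (Φ : ℤ → Set (PrimeSpectrum R)) : Prop :=
  ∀ n : ℤ, ∀ p q : PrimeSpectrum R, p ⋖ q → q ∈ Φ n → p ∈ Φ (n - 1)

/-!
A non-degenerate decreasing filtration `Φ` of `Spec R` is the family of strict superlevel sets
`Φ(n) = {p | n < f p}` of its associated function `f = f_Φ`. In these terms, being specialization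
closed and sliced says exactly that `f` is strictly monotone, so `f q ≥ f p + 1` whenever `p ⋖ q`,
while the weak Cousin condition says `f q ≤ f p + 1` whenever `p ⋖ q`.
-/

open Set

theorem exists_eq_setOf_lt_of_antitone {α : Type*} {Φ : ℤ → Set α}
    (hanti : ∀ n, Φ (n + 1) ⊆ Φ n) (hunion : ⋃ n, Φ n = univ) (hinter : ⋂ n, Φ n = ∅) :
    ∃ f : α → ℤ, Φ = fun n => {p | n < f p} := by
  have hmax : ∀ p, ∃ m, p ∈ Φ m ∧ ∀ k, p ∈ Φ k → k ≤ m := by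
    intro p
    obtain ⟨a, ha⟩ : ∃ a, p ∈ Φ a := mem_iUnion.1 (hunion ▸ mem_univ p)
    obtain ⟨b, hb⟩ : ∃ b, p ∉ Φ b := by
      by_contra! h
      exact notMem_empty p (hinter ▸ mem_iInter.2 h)
    refine Int.exists_greatest_of_bdd ⟨b, fun k hk => ?_⟩ ⟨a, ha⟩
    by_contra! hbk
    exact hb (antitone_int_of_succ_le hanti hbk.le hk)
  choose m hm hm_max using hmax
  refine ⟨fun p => m p + 1, funext fun n => ext fun p => ⟨fun hp => ?_, fun hn => ?_⟩⟩
  · exact Int.lt_add_one_iff.2 (hm_max p n hp)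
  · exact antitone_int_of_succ_le hanti (Int.lt_add_one_iff.1 hn) (hm p)

section

variable {R : Type*} [CommRing R]

theorem satisfiesWeakCousin_setOf_lt_iff (f : PrimeSpectrum R → ℤ) :
    SatisfiesWeakCousin (fun n => {p | n < f p}) ↔ ∀ p q, p ⋖ q → f q ≤ f p + 1 := by
  refine ⟨fun h p q hpq => ?_, fun h n p q hpq hq => ?_⟩
  · have : f q - 1 - 1 < f p := h (f q - 1) p q hpq (sub_one_lt (f q))
    omega
  · have : n < f q := hq
    have := h p q hpq
    show n - 1 < f p
    omega

theorem IsSliceSpFiltration.strictMono {f : PrimeSpectrum R → ℤ}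
    (hΦ : IsSliceSpFiltration fun n => {p | n < f p}) : StrictMono f := by
  obtain ⟨⟨hup, -⟩, -, hslice⟩ := hΦ
  intro p q hpq
  have hle : f p ≤ f q := by
    have : f p - 1 < f q := hup (f p - 1) p (sub_one_lt (f p)) q hpq.le
    omega
  refine hle.lt_of_ne fun heq => hslice (f p - 1) p ?_ q ?_ hpq
  · exact ⟨sub_one_lt (f p), by simp⟩
  · exact ⟨show f p - 1 < f q by omega, by simp [heq]⟩

end

theorem stmt_3_general (R : Type*) [CommRing R]
    (Φ : ℤ → Set (PrimeSpectrum R)) (hΦ : IsSliceSpFiltration Φ) :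
    SatisfiesWeakCousin Φ ↔
      ∃ d : PrimeSpectrum R → ℤ, IsCodimFunction d ∧
        ∀ n : ℤ, Φ n = {p : PrimeSpectrum R | n < d p} := by
  constructor
  · intro hwc
    obtain ⟨f, rfl⟩ := exists_eq_setOf_lt_of_antitone hΦ.1.2 hΦ.2.1.1 hΦ.2.1.2
    have hcousin := (satisfiesWeakCousin_setOf_lt_iff f).1 hwc
    exact ⟨f, fun p q hpq => le_antisymm (hcousin p q hpq) (hΦ.strictMono hpq.lt),
      fun _ => rfl⟩
  · rintro ⟨d, hd, hΦd⟩
    rw [show Φ = _ from funext hΦd, satisfiesWeakCousin_setOf_lt_iff]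
    exact fun p q hpq => (hd p q hpq).le

/-- A slice sp-filtration of the spectrum of a commutative noetherian ring satisfies the
weak Cousin condition if and only if it is a codimension filtration, i.e. it is of the
form `Φ_d(n) = {p | d(p) > n}` for a codimension function `d` (necessarily `d = f_Φ`). -/
theorem stmt_3 (R : Type*) [CommRing R] [IsNoetherianRing R]
    (Φ : ℤ → Set (PrimeSpectrum R)) (hΦ : IsSliceSpFiltration Φ) :
    SatisfiesWeakCousin Φ ↔
      ∃ d : PrimeSpectrum R → ℤ, IsCodimFunction d ∧
        ∀ n : ℤ, Φ n = {p : PrimeSpectrum R | n < d p} :=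
  stmt_3_general R Φ hΦ
end

section
/- Let φ : R → A be a finite homomorphism of commutative noetherian rings (i.e., A is finitely generated as an R-module via φ) and let f : Spec A → Spec R be the induced map, f(P) = φ⁻¹(P). If Φ is a slice sp-filtration of Spec R, then the preimage f⁻¹Φ, defined by (f⁻¹Φ)(n) = f⁻¹(Φ(n)), is a slice sp-filtration of Spec A. -/
/-!
Preimages under any monotone map `Spec A → Spec R` preserve sp-filtrations and
non-degeneracy. The slice condition needs the map to be *strictly* monotone, and for `comap φ`
with `φ` finite, hence integral, this is incomparability: a strict inclusion `P ⊊ Q` in a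
slice of `f⁻¹Φ` contracts to a strict inclusion in the same slice of `Φ`.
-/

open PrimeSpectrum

theorem RingHom.IsIntegral.strictMono_comap {R S : Type*} [CommRing R] [CommRing S]
    {f : R →+* S} (hf : f.IsIntegral) : StrictMono (comap f) := fun _ Q hPQ => by
  let _ := f.toAlgebra
  have : Algebra.IsIntegral R S := ⟨hf⟩
  exact Ideal.IsIntegral.comap_lt_comap (R := R) (J := Q.asIdeal) hPQ

section Preimage

variable {R A : Type*} [CommRing R] [CommRing A] {Φ : ℤ → Set (PrimeSpectrum R)}
  {f : PrimeSpectrum A → PrimeSpectrum R}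

theorem IsSpFiltration.preimage_of_monotone (hΦ : IsSpFiltration Φ) (hf : Monotone f) :
    IsSpFiltration (fun n => f ⁻¹' Φ n) :=
  ⟨fun n _ hP _ hPQ => hΦ.1 n _ hP _ (hf hPQ), fun n _ hP => hΦ.2 n hP⟩

theorem IsNondegenerate.preimage (hΦ : IsNondegenerate Φ)
    (f : PrimeSpectrum A → PrimeSpectrum R) : IsNondegenerate (fun n => f ⁻¹' Φ n) := by
  unfold IsNondegenerate
  rw [← Set.preimage_iUnion, ← Set.preimage_iInter, hΦ.1, hΦ.2]
  exact ⟨Set.preimage_univ, Set.preimage_empty⟩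

theorem IsSliceSpFiltration.preimage_of_strictMono (hΦ : IsSliceSpFiltration Φ)
    (hf : StrictMono f) : IsSliceSpFiltration (fun n => f ⁻¹' Φ n) :=
  ⟨hΦ.1.preimage_of_monotone hf.monotone, hΦ.2.1.preimage f,
    fun n _ hP _ hQ hPQ => hΦ.2.2 n _ hP _ hQ (hf hPQ)⟩

end Preimage

theorem stmt_10_general {R A : Type*} [CommRing R] [CommRing A]
    (φ : R →+* A) (hφ : φ.Finite)
    (Φ : ℤ → Set (PrimeSpectrum R)) (hΦ : IsSliceSpFiltration Φ) :
    IsSliceSpFiltration (fun n => PrimeSpectrum.comap φ ⁻¹' Φ n) :=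
  hΦ.preimage_of_strictMono hφ.to_isIntegral.strictMono_comap

/-- Let `φ : R → A` be a finite homomorphism of commutative noetherian rings (i.e. `A` is
finitely generated as an `R`-module via `φ`) and `f : Spec A → Spec R` the induced map
`P ↦ φ⁻¹(P)`. If `Φ` is a slice sp-filtration of `Spec R`, then the preimage sp-filtration
`f⁻¹Φ`, defined by `(f⁻¹Φ)(n) = f⁻¹(Φ(n))`, is a slice sp-filtration of `Spec A`. -/
theorem stmt_10 {R A : Type*} [CommRing R] [IsNoetherianRing R] [CommRing A]
    [IsNoetherianRing A] (φ : R →+* A) (hφ : φ.Finite)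
    (Φ : ℤ → Set (PrimeSpectrum R)) (hΦ : IsSliceSpFiltration Φ) :
    IsSliceSpFiltration (fun n => PrimeSpectrum.comap φ ⁻¹' Φ n) :=
  stmt_10_general φ hφ Φ hΦ
end

section
/- Let R be a commutative noetherian local ring with maximal ideal m, let I be an ideal of R with I ⊆ m, let P be a projective R-module, and let N be a submodule of P with I·N = N. Then N = 0. -/
/-!
A projective module embeds into a free module `R^(P)`, and on a free module the `I`-adic
filtration is separated as soon as `⋂ Iⁿ = 0` in `R`, which is Krull's intersection theorem
for `I ≠ R` in a noetherian local ring. A submodule with `I • N = N` equals `Iⁿ • N` for all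
`n`, hence lies in `⋂ Iⁿ • P = 0`.
-/

namespace Submodule

variable {R M M' : Type*} [CommRing R] [AddCommGroup M] [Module R M] [AddCommGroup M']
  [Module R M'] {I : Ideal R}

theorem pow_smul_eq_self_of_smul_eq_self {N : Submodule R M} (hN : I • N = N) (n : ℕ) :
    I ^ n • N = N := by
  induction n with
  | zero => simp
  | succ n ih => rw [pow_succ, mul_smul, hN, ih]

theorem eq_bot_of_smul_eq_self (h : ⨅ n : ℕ, I ^ n • (⊤ : Submodule R M) = ⊥)
    {N : Submodule R M} (hN : I • N = N) : N = ⊥ :=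
  eq_bot_iff.mpr <| h ▸ le_iInf fun n =>
    (pow_smul_eq_self_of_smul_eq_self hN n).ge.trans (smul_mono_right _ le_top)

theorem iInf_pow_smul_top_eq_bot_of_injective {f : M →ₗ[R] M'} (hf : Function.Injective f)
    (h : ⨅ n : ℕ, I ^ n • (⊤ : Submodule R M') = ⊥) :
    ⨅ n : ℕ, I ^ n • (⊤ : Submodule R M) = ⊥ := by
  refine eq_bot_iff.mpr fun x hx => ?_
  have hfx : f x ∈ ⨅ n : ℕ, I ^ n • (⊤ : Submodule R M') :=
    mem_iInf _ |>.mpr fun n => smul_top_le_comap_smul_top _ f ((mem_iInf _).mp hx n)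
  rw [h, mem_bot] at hfx
  exact (mem_bot R).mpr (hf (hfx.trans f.map_zero.symm))

end Submodule

theorem Finsupp.iInf_pow_smul_top_eq_bot {R ι : Type*} [CommRing R] {I : Ideal R}
    (h : ⨅ n : ℕ, I ^ n = ⊥) :
    ⨅ n : ℕ, I ^ n • (⊤ : Submodule R (ι →₀ R)) = ⊥ := by
  refine eq_bot_iff.mpr fun x hx => (Submodule.mem_bot R).mpr (Finsupp.ext fun i => ?_)
  have hxi : x i ∈ ⨅ n : ℕ, I ^ n := Submodule.mem_iInf _ |>.mpr fun n => by
    simpa using Submodule.smul_top_le_comap_smul_top _ (Finsupp.lapply i)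
      ((Submodule.mem_iInf _).mp hx n)
  simpa [h] using hxi

theorem Module.Projective.iInf_pow_smul_top_eq_bot {R P : Type*} [CommRing R] [AddCommGroup P]
    [Module R P] [Module.Projective R P] {I : Ideal R} (h : ⨅ n : ℕ, I ^ n = ⊥) :
    ⨅ n : ℕ, I ^ n • (⊤ : Submodule R P) = ⊥ := by
  obtain ⟨s, hs⟩ := Module.projective_def.mp ‹Module.Projective R P›
  exact Submodule.iInf_pow_smul_top_eq_bot_of_injective hs.injective
    (Finsupp.iInf_pow_smul_top_eq_bot h)

/-- Let `R` be a commutative noetherian local ring with maximal ideal `m`, let `I ⊆ m` be an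
ideal, let `P` be a projective `R`-module, and let `N` be a submodule of `P` with
`I·N = N`. Then `N = 0`. -/
theorem stmt_15 {R : Type*} [CommRing R] [IsNoetherianRing R] [IsLocalRing R]
    (I : Ideal R) (hI : I ≤ IsLocalRing.maximalIdeal R)
    (P : Type*) [AddCommGroup P] [Module R P] [Module.Projective R P]
    (N : Submodule R P) (hN : I • N = N) :
    N = ⊥ := by
  have hI_ne_top : I ≠ ⊤ := ne_top_of_le_ne_top (IsLocalRing.maximalIdeal.isMaximal R).ne_top hI
  exact Submodule.eq_bot_of_smul_eq_self
    (Module.Projective.iInf_pow_smul_top_eq_bot (Ideal.iInf_pow_eq_bot_of_isLocalRing I hI_ne_top))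
    hN
end
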